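/- arXiv:1908.07036 — 7 statements merged into one kernel-verified Lean document; each statement's English description precedes it below -/
import Mathlib

section
/- Let Σ be a CAT(1) space that is a spherical suspension over a CAT(1) space Y with vertex points ±v ∈ Σ. If some point w ∈ Σ has no opposite (no point at distance ≥ π from w), then both Σ and Σ \ {±v} are contractible. -/
open Set Real

/-- `γ` is a unit-speed geodesic on `[a,b]`. -/
def IsUnitSpeedOn {X : Type*} [MetricSpace X] (γ : ℝ → X) (a b : ℝ) : Prop :=
  ∀ s ∈ Icc a b, ∀ t ∈ Icc a b, dist (γ s) (γ t) = |s - t|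

/-- Comparison distance in the unit sphere `𝕊²`: for a spherical comparison triangle with
side lengths `a = d(q,r)`, `b = d(p,r)`, `c = d(p,q)`, this is the spherical distance from
the vertex corresponding to `p` to the point at arclength `t` from `q` along the side `[q,r]`,
computed by the spherical law of cosines. -/
noncomputable def sphCompDist (a b c t : ℝ) : ℝ :=
  Real.arccos (Real.cos c * Real.cos t +
    Real.sin c * Real.sin t *
      ((Real.cos b - Real.cos a * Real.cos c) / (Real.sin a * Real.sin c)))

/-- A metric space is `CAT(1)`: points at distance `< π` are joined by (unit-speed) geodesics,
and for every geodesic triangle of perimeter `< 2π` the distance from a vertex to a point on the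
opposite side is bounded by the corresponding distance in a spherical comparison triangle. -/
def IsCAT1 (X : Type*) [MetricSpace X] : Prop :=
  (∀ x y : X, dist x y < π → ∃ γ : ℝ → X,
      γ 0 = x ∧ γ (dist x y) = y ∧ IsUnitSpeedOn γ 0 (dist x y)) ∧
  (∀ (p : X) (γ : ℝ → X) (L : ℝ), 0 ≤ L → IsUnitSpeedOn γ 0 L → dist (γ 0) (γ L) = L →
      dist p (γ 0) + L + dist (γ L) p < 2 * π →
      ∀ t ∈ Icc 0 L, dist p (γ t) ≤ sphCompDist L (dist p (γ L)) (dist p (γ 0)) t)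

set_option maxHeartbeats 1000000

lemma my_abs_cos_sub_cos_le (x y : ℝ) : |Real.cos x - Real.cos y| ≤ |x - y| := by
  rw [Real.cos_sub_cos, abs_mul, abs_mul]
  have h1 : |Real.sin ((x + y) / 2)| ≤ 1 := abs_le.2 ⟨Real.neg_one_le_sin _, Real.sin_le_one _⟩
  have h2 : |Real.sin ((x - y) / 2)| ≤ |(x - y) / 2| := Real.abs_sin_le_abs
  calc |(-2 : ℝ)| * |Real.sin ((x + y) / 2)| * |Real.sin ((x - y) / 2)|
      ≤ |(-2 : ℝ)| * 1 * |(x - y) / 2| := by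
        gcongr
      _ = |x - y| := by rw [abs_div]; simp; ring

lemma my_abs_sin_sub_sin_le (x y : ℝ) : |Real.sin x - Real.sin y| ≤ |x - y| := by
  rw [Real.sin_sub_sin, abs_mul, abs_mul]
  have h1 : |Real.cos ((x + y) / 2)| ≤ 1 := abs_le.2 ⟨Real.neg_one_le_cos _, Real.cos_le_one _⟩
  have h2 : |Real.sin ((x - y) / 2)| ≤ |(x - y) / 2| := Real.abs_sin_le_abs
  calc |(2 : ℝ)| * |Real.sin ((x - y) / 2)| * |Real.cos ((x + y) / 2)|
      ≤ |(2 : ℝ)| * |(x - y) / 2| * 1 := by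
        gcongr
      _ = |x - y| := by rw [abs_div]; simp; ring

lemma my_arccos_antitone {x y : ℝ} (h : x ≤ y) : Real.arccos y ≤ Real.arccos x := by
  unfold Real.arccos
  exact sub_le_sub_left (Real.monotone_arcsin h) _


/-- If the `CAT(1)` space `S` is the spherical suspension, with vertices `v₁, v₂`, of a
`CAT(1)` space `Y` (of diameter `≤ π`), and some point `w ∈ S` has no opposite (no point at
distance `≥ π`), then both `S` and `S \ {v₁, v₂}` are contractible. -/
theorem suspension_contractible_of_no_opposite
    {Y S : Type*} [MetricSpace Y] [MetricSpace S]
    (hY : IsCAT1 Y) (hS : IsCAT1 S)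
    (hdiamY : ∀ y y' : Y, dist y y' ≤ π)
    (v₁ v₂ : S) (Φ : Y → ℝ → S)
    (hΦ0 : ∀ y, Φ y 0 = v₁) (hΦπ : ∀ y, Φ y π = v₂)
    (hsurj : ∀ x : S, ∃ y s, s ∈ Icc (0:ℝ) π ∧ Φ y s = x)
    (hdist : ∀ y y' : Y, ∀ s ∈ Icc (0:ℝ) π, ∀ s' ∈ Icc (0:ℝ) π,
      Real.cos (dist (Φ y s) (Φ y' s')) =
        Real.cos s * Real.cos s' + Real.sin s * Real.sin s' * Real.cos (dist y y'))
    (w : S) (hw : ∀ z : S, dist w z < π) :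
    ContractibleSpace S ∧ ContractibleSpace {z : S // z ≠ v₁ ∧ z ≠ v₂} := by
  classical
  have hπ := Real.pi_pos
  -- choose geodesics from w to every point
  have hgeoex : ∀ x : S, ∃ γ : ℝ → S, γ 0 = w ∧ γ (dist w x) = x ∧ IsUnitSpeedOn γ 0 (dist w x) :=
    fun x => hS.1 w x (hw x)
  choose geo hgeo0 hgeoL hgeoU using hgeoex
  -- spherical coordinates of w
  obtain ⟨a, ta, hta, hwa⟩ := hsurj w
  have hcosv₁ : Real.cos (dist w v₁) = Real.cos ta := by
    have h := hdist a a ta hta 0 ⟨le_rfl, hπ.le⟩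
    rw [hwa, hΦ0] at h
    simpa using h
  have hwv₁ : dist w v₁ = ta :=
    Real.injOn_cos ⟨dist_nonneg, (hw v₁).le⟩ ⟨hta.1, hta.2⟩ hcosv₁
  have hcosv₂ : Real.cos (dist w v₂) = Real.cos (π - ta) := by
    have h := hdist a a ta hta π ⟨hπ.le, le_rfl⟩
    rw [hwa, hΦπ] at h
    rw [Real.cos_pi_sub, h]
    simp
  have hwv₂ : dist w v₂ = π - ta :=
    Real.injOn_cos ⟨dist_nonneg, (hw v₂).le⟩ ⟨by linarith [hta.2], by linarith [hta.1]⟩ hcosv₂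
  have hta0 : 0 < ta := by have := hw v₂; rw [hwv₂] at this; linarith
  have htaπ : ta < π := by have := hw v₁; rw [hwv₁] at this; exact this
  have hsinta : 0 < Real.sin ta := Real.sin_pos_of_pos_of_lt_pi hta0 htaπ
  -- no point of Y is opposite to a
  have hcosd : ∀ b : Y, Real.cos (dist a b) ≠ -1 := by
    intro b hb
    have h := hdist a b ta hta (π - ta) ⟨by linarith, by linarith⟩
    rw [hwa, hb, Real.cos_pi_sub, Real.sin_pi_sub] at h
    have h2 : Real.cos (dist w (Φ b (π - ta))) = Real.cos π := by
      rw [h, Real.cos_pi]; nlinarith [Real.sin_sq_add_cos_sq ta]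
    have h3 := Real.injOn_cos ⟨dist_nonneg, (hw _).le⟩ ⟨hπ.le, le_rfl⟩ h2
    have := hw (Φ b (π - ta)); linarith
  have hwne₁ : w ≠ v₁ := by intro h; rw [h, dist_self] at hwv₁; linarith
  have hwne₂ : w ≠ v₂ := by intro h; rw [h, dist_self] at hwv₂; linarith
  -- geodesics from w to non-vertex points avoid the vertices
  have Kvert : ∀ x : S, x ≠ v₁ → x ≠ v₂ → ∀ u ∈ Icc (0:ℝ) (dist w x),
      geo x u ≠ v₁ ∧ geo x u ≠ v₂ := by
    intro x hx1 hx2 u hu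
    obtain ⟨b, s, hs, hxb⟩ := hsurj x
    have hs0 : 0 < s := lt_of_le_of_ne hs.1 (fun h => hx1 (by rw [← hxb, ← h]; exact hΦ0 b))
    have hsπ : s < π := lt_of_le_of_ne hs.2 (fun h => hx2 (by rw [← hxb, h]; exact hΦπ b))
    have hsins : 0 < Real.sin s := Real.sin_pos_of_pos_of_lt_pi hs0 hsπ
    have hLx := hw x
    have hdux : dist w (geo x u) = u := by
      have h := hgeoU x 0 ⟨le_rfl, dist_nonneg⟩ u hu
      rw [hgeo0] at h
      rw [h, zero_sub, abs_neg, abs_of_nonneg hu.1]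
    have hdxu : dist (geo x u) x = dist w x - u := by
      have h := hgeoU x u hu (dist w x) ⟨dist_nonneg, le_rfl⟩
      rw [hgeoL] at h
      rw [h, abs_of_nonpos (by linarith [hu.2])]
      ring
    have hcw := hdist a b ta hta s hs
    rw [hwa, hxb] at hcw
    constructor
    · intro hgv
      rw [hgv] at hdux hdxu
      have hu_eq : u = ta := by linarith [hwv₁, hdux]
      have hv1x : Real.cos (dist v₁ x) = Real.cos s := by
        have h := hdist b b 0 ⟨le_rfl, hπ.le⟩ s hs
        rw [hΦ0, hxb] at h
        simpa using h
      have hv1xlt : dist v₁ x < π := by rw [hdxu]; linarith [hu.1]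
      have hv1xeq : dist v₁ x = s := Real.injOn_cos ⟨dist_nonneg, hv1xlt.le⟩ ⟨hs.1, hs.2⟩ hv1x
      have hsum : dist w x = ta + s := by linarith [hdxu, hv1xeq]
      have hcosL : Real.cos (dist w x) = Real.cos ta * Real.cos s - Real.sin ta * Real.sin s := by
        rw [hsum, Real.cos_add]
      have hm1 : Real.cos (dist a b) = -1 := by
        have h4 : Real.sin ta * Real.sin s * Real.cos (dist a b)
            = Real.sin ta * Real.sin s * (-1) := by nlinarith [hcw, hcosL]
        exact mul_left_cancel₀ (by positivity) h4
      exact hcosd b hm1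
    · intro hgv
      rw [hgv] at hdux hdxu
      have hu_eq : u = π - ta := by linarith [hwv₂, hdux]
      have hv2x : Real.cos (dist v₂ x) = Real.cos (π - s) := by
        have h := hdist b b π ⟨hπ.le, le_rfl⟩ s hs
        rw [hΦπ, hxb] at h
        rw [Real.cos_pi_sub, h]
        simp
      have hv2xlt : dist v₂ x < π := by rw [hdxu]; linarith [hu.1]
      have hv2xeq : dist v₂ x = π - s :=
        Real.injOn_cos ⟨dist_nonneg, hv2xlt.le⟩ ⟨by linarith, by linarith⟩ hv2x
      have hsum : dist w x = 2 * π - (ta + s) := by linarith [hdxu, hv2xeq]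
      have hcosL : Real.cos (dist w x) = Real.cos ta * Real.cos s - Real.sin ta * Real.sin s := by
        rw [hsum, Real.cos_two_pi_sub, Real.cos_add]
      have hm1 : Real.cos (dist a b) = -1 := by
        have h4 : Real.sin ta * Real.sin s * Real.cos (dist a b)
            = Real.sin ta * Real.sin s * (-1) := by nlinarith [hcw, hcosL]
        exact mul_left_cancel₀ (by positivity) h4
      exact hcosd b hm1
  -- the contraction map is continuous
  have hdistG : ∀ q : S × unitInterval,
      dist w (geo q.1 ((q.2 : ℝ) * dist w q.1)) = (q.2 : ℝ) * dist w q.1 := by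
    intro q
    have hsmem : (q.2 : ℝ) * dist w q.1 ∈ Icc (0:ℝ) (dist w q.1) :=
      ⟨mul_nonneg q.2.2.1 dist_nonneg, mul_le_of_le_one_left dist_nonneg q.2.2.2⟩
    have h := hgeoU q.1 0 ⟨le_rfl, dist_nonneg⟩ _ hsmem
    rw [hgeo0] at h
    rw [h, zero_sub, abs_neg, abs_of_nonneg hsmem.1]
  have hGcont : Continuous (fun q : S × unitInterval => geo q.1 ((q.2 : ℝ) * dist w q.1)) := by
    rw [continuous_iff_continuousAt]
    rintro ⟨x₀, t₀⟩
    have hL₀π : dist w x₀ < π := hw x₀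
    unfold ContinuousAt
    rw [tendsto_iff_dist_tendsto_zero]
    by_cases h0 : (t₀ : ℝ) * dist w x₀ = 0
    · -- the contraction at (x₀, t₀) is `w` itself
      have hq0 : geo x₀ ((t₀ : ℝ) * dist w x₀) = w := by rw [h0, hgeo0]
      have heq : (fun q : S × unitInterval =>
          dist (geo q.1 ((q.2 : ℝ) * dist w q.1)) (geo x₀ ((t₀ : ℝ) * dist w x₀)))
          = fun q : S × unitInterval => (q.2 : ℝ) * dist w q.1 := by
        funext q
        rw [hq0, dist_comm, hdistG q]
      rw [heq]
      have hcont : Continuous (fun q : S × unitInterval => (q.2 : ℝ) * dist w q.1) :=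
        (continuous_subtype_val.comp continuous_snd).mul (continuous_const.dist continuous_fst)
      have h := hcont.tendsto (x₀, t₀)
      simpa [h0] using h
    · -- the main case
      have hs₀pos : 0 < (t₀ : ℝ) * dist w x₀ :=
        lt_of_le_of_ne (mul_nonneg t₀.2.1 dist_nonneg) (Ne.symm h0)
      have hs₀le : (t₀ : ℝ) * dist w x₀ ≤ dist w x₀ := mul_le_of_le_one_left dist_nonneg t₀.2.2
      have hL₀pos : 0 < dist w x₀ := lt_of_lt_of_le hs₀pos hs₀le
      have hsinL₀ : 0 < Real.sin (dist w x₀) := Real.sin_pos_of_pos_of_lt_pi hL₀pos hL₀π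
      have hp0 : dist w (geo x₀ ((t₀ : ℝ) * dist w x₀)) = (t₀ : ℝ) * dist w x₀ := hdistG (x₀, t₀)
      have hpx₀ : dist (geo x₀ ((t₀ : ℝ) * dist w x₀)) x₀ = dist w x₀ - (t₀ : ℝ) * dist w x₀ := by
        have h := hgeoU x₀ ((t₀ : ℝ) * dist w x₀) ⟨hs₀pos.le, hs₀le⟩ (dist w x₀)
          ⟨dist_nonneg, le_rfl⟩
        rw [hgeoL] at h
        rw [h, abs_of_nonpos (by linarith)]
        ring
      apply squeeze_zero' (Filter.Eventually.of_forall fun q => dist_nonneg)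
        (g := fun q : S × unitInterval => Real.arccos
          (Real.cos ((q.2 : ℝ) * dist w q.1 - (t₀ : ℝ) * dist w x₀)
            - 4 / Real.sin (dist w x₀) * dist q.1 x₀))
      · -- eventual bound by the comparison estimate
        have hεpos : (0:ℝ) < min (π - dist w x₀) (Real.sin (dist w x₀) / 2) :=
          lt_min (by linarith) (by positivity)
        have hc : Filter.Tendsto (fun q : S × unitInterval => dist q.1 x₀)
            (nhds (x₀, t₀)) (nhds 0) := by
          have hcc : Continuous (fun q : S × unitInterval => dist q.1 x₀) :=
            continuous_fst.dist continuous_const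
          simpa using hcc.tendsto ((x₀, t₀) : S × unitInterval)
        filter_upwards [hc.eventually_lt_const hεpos] with q hq
        obtain ⟨x, t⟩ := q
        simp only at hq ⊢
        have hδ1 : dist x x₀ < π - dist w x₀ := lt_of_lt_of_le hq (min_le_left _ _)
        have hδ2 : dist x x₀ < Real.sin (dist w x₀) / 2 := lt_of_lt_of_le hq (min_le_right _ _)
        have hδ0 : 0 ≤ dist x x₀ := dist_nonneg
        have hLL₀ : |dist w x - dist w x₀| ≤ dist x x₀ := by
          rw [dist_comm w x, dist_comm w x₀]
          exact abs_dist_sub_le x x₀ w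
        have hLL₀' := abs_le.1 hLL₀
        have hsinL : Real.sin (dist w x₀) / 2 ≤ Real.sin (dist w x) := by
          have h1 := abs_le.1 (my_abs_sin_sub_sin_le (dist w x) (dist w x₀))
          linarith [h1.1, h1.2, hLL₀'.1, hLL₀'.2]
        have hsinLpos : 0 < Real.sin (dist w x) := lt_of_lt_of_le (by positivity) hsinL
        have hs_mem : (t : ℝ) * dist w x ∈ Icc (0:ℝ) (dist w x) :=
          ⟨mul_nonneg t.2.1 dist_nonneg, mul_le_of_le_one_left dist_nonneg t.2.2⟩
        set p := geo x₀ ((t₀ : ℝ) * dist w x₀) with hpdef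
        have hb_low : dist w x - (t₀ : ℝ) * dist w x₀ ≤ dist p x := by
          have := dist_triangle w p x
          linarith [hp0]
        have hb_up : dist p x ≤ dist w x₀ - (t₀ : ℝ) * dist w x₀ + dist x x₀ := by
          have h1 := dist_triangle p x₀ x
          rw [dist_comm x₀ x] at h1
          linarith [hpx₀]
        have hperim : dist p (geo x 0) + dist w x + dist (geo x (dist w x)) p < 2 * π := by
          rw [hgeo0, hgeoL, dist_comm p w, hp0, dist_comm x p]
          linarith [hb_up, hLL₀'.2]
        have happ := hS.2 p (geo x) (dist w x) dist_nonneg (hgeoU x)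
          (by rw [hgeo0, hgeoL]) hperim ((t : ℝ) * dist w x) hs_mem
        rw [hgeo0, hgeoL, dist_comm p w, hp0] at happ
        have hfinal : sphCompDist (dist w x) (dist p x) ((t₀ : ℝ) * dist w x₀) ((t : ℝ) * dist w x)
            ≤ Real.arccos (Real.cos ((t : ℝ) * dist w x - (t₀ : ℝ) * dist w x₀)
              - 4 / Real.sin (dist w x₀) * dist x x₀) := by
          unfold sphCompDist
          apply my_arccos_antitone
          have hsins₀ : 0 < Real.sin ((t₀ : ℝ) * dist w x₀) :=
            Real.sin_pos_of_pos_of_lt_pi hs₀pos (lt_of_le_of_lt hs₀le hL₀π)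
          have hkey : Real.cos ((t₀ : ℝ) * dist w x₀) * Real.cos ((t : ℝ) * dist w x)
              + Real.sin ((t₀ : ℝ) * dist w x₀) * Real.sin ((t : ℝ) * dist w x) *
                ((Real.cos (dist p x) - Real.cos (dist w x) * Real.cos ((t₀ : ℝ) * dist w x₀)) /
                  (Real.sin (dist w x) * Real.sin ((t₀ : ℝ) * dist w x₀)))
              = Real.cos ((t : ℝ) * dist w x - (t₀ : ℝ) * dist w x₀)
                + Real.sin ((t : ℝ) * dist w x) / Real.sin (dist w x) *
                  (Real.cos (dist p x) - Real.cos (dist w x - (t₀ : ℝ) * dist w x₀)) := by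
            rw [Real.cos_sub, Real.cos_sub]
            field_simp
            ring
          rw [hkey]
          have hb2 : |dist p x - (dist w x - (t₀ : ℝ) * dist w x₀)| ≤ 2 * dist x x₀ :=
            abs_le.2 ⟨by linarith [hb_low], by linarith [hb_up, hLL₀'.2]⟩
          have hA := abs_le.1 (le_trans (my_abs_cos_sub_cos_le (dist p x)
            (dist w x - (t₀ : ℝ) * dist w x₀)) hb2)
          have hsins : 0 ≤ Real.sin ((t : ℝ) * dist w x) :=
            Real.sin_nonneg_of_nonneg_of_le_pi hs_mem.1 (by linarith [hs_mem.2, hw x])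
          have hsins1 : Real.sin ((t : ℝ) * dist w x) ≤ 1 := Real.sin_le_one _
          have hC2 : Real.sin ((t : ℝ) * dist w x) / Real.sin (dist w x)
              ≤ 2 / Real.sin (dist w x₀) := by
            rw [div_le_div_iff₀ hsinLpos hsinL₀]
            have hq1 : Real.sin ((t : ℝ) * dist w x) * Real.sin (dist w x₀)
                ≤ 1 * Real.sin (dist w x₀) :=
              mul_le_mul_of_nonneg_right hsins1 hsinL₀.le
            linarith
          have hrpos : 0 ≤ Real.sin ((t : ℝ) * dist w x) / Real.sin (dist w x) :=
            div_nonneg hsins hsinLpos.le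
          have h5 : Real.sin ((t : ℝ) * dist w x) / Real.sin (dist w x) *
              (-(2 * dist x x₀)) ≤ Real.sin ((t : ℝ) * dist w x) / Real.sin (dist w x) *
              (Real.cos (dist p x) - Real.cos (dist w x - (t₀ : ℝ) * dist w x₀)) :=
            mul_le_mul_of_nonneg_left (by linarith [hA.1]) hrpos
          have h6 : Real.sin ((t : ℝ) * dist w x) / Real.sin (dist w x) * (2 * dist x x₀)
              ≤ 2 / Real.sin (dist w x₀) * (2 * dist x x₀) :=
            mul_le_mul_of_nonneg_right hC2 (by positivity)
          have h7 : 2 / Real.sin (dist w x₀) * (2 * dist x x₀)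
              = 4 / Real.sin (dist w x₀) * dist x x₀ := by ring
          linarith [h5, h6, hkey]
        calc dist (geo x ((t : ℝ) * dist w x)) p = dist p (geo x ((t : ℝ) * dist w x)) :=
              dist_comm _ _
          _ ≤ _ := le_trans happ hfinal
      · -- the bound tends to 0
        have hgc : Continuous (fun q : S × unitInterval => Real.arccos
            (Real.cos ((q.2 : ℝ) * dist w q.1 - (t₀ : ℝ) * dist w x₀)
              - 4 / Real.sin (dist w x₀) * dist q.1 x₀)) := by
          apply Real.continuous_arccos.comp
          apply Continuous.sub
          · exact Real.continuous_cos.comp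
              (((continuous_subtype_val.comp continuous_snd).mul
                (continuous_const.dist continuous_fst)).sub continuous_const)
          · exact continuous_const.mul (continuous_fst.dist continuous_const)
        have h := hgc.tendsto (x₀, t₀)
        simpa only [dist_self, sub_self, Real.cos_zero, mul_zero, sub_zero,
          Real.arccos_one] using h
  constructor
  · rw [contractible_iff_id_nullhomotopic]
    refine ⟨w, ⟨?_⟩⟩
    exact
      { toContinuousMap := ⟨fun q => geo q.2 (((unitInterval.symm q.1 : unitInterval) : ℝ) * dist w q.2),
          hGcont.comp (continuous_snd.prodMk
            (unitInterval.continuous_symm.comp continuous_fst))⟩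
        map_zero_left := fun x => by
          simp only [ContinuousMap.coe_mk, unitInterval.symm_zero, Set.Icc.coe_one, one_mul,
            hgeoL, ContinuousMap.id_apply]
        map_one_left := fun x => by
          simp only [ContinuousMap.coe_mk, unitInterval.symm_one, Set.Icc.coe_zero, zero_mul,
            hgeo0, ContinuousMap.const_apply] }
  · rw [contractible_iff_id_nullhomotopic]
    refine ⟨⟨w, hwne₁, hwne₂⟩, ⟨?_⟩⟩
    exact
      { toContinuousMap := ⟨fun q =>
            ⟨geo q.2.1 (((unitInterval.symm q.1 : unitInterval) : ℝ) * dist w q.2.1),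
              Kvert q.2.1 q.2.2.1 q.2.2.2 _
                ⟨mul_nonneg (unitInterval.symm q.1).2.1 dist_nonneg,
                  mul_le_of_le_one_left dist_nonneg (unitInterval.symm q.1).2.2⟩⟩,
          Continuous.subtype_mk (hGcont.comp
            ((continuous_subtype_val.comp continuous_snd).prodMk
              (unitInterval.continuous_symm.comp continuous_fst))) _⟩
        map_zero_left := fun x => by
          apply Subtype.ext
          simp only [ContinuousMap.coe_mk, unitInterval.symm_zero, Set.Icc.coe_one, one_mul,
            hgeoL, ContinuousMap.id_apply]
        map_one_left := fun x => by
          apply Subtype.ext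
          simp only [ContinuousMap.coe_mk, unitInterval.symm_one, Set.Icc.coe_zero, zero_mul,
            hgeo0, ContinuousMap.const_apply] }
end

section
/- Let X be a CAT(1) space with radius strictly less than π, i.e. there exists p ∈ X and r < π with X = closure of B_r(p). Then X is contractible. -/
open Set Real

private lemma key_cont {X : Type*} [MetricSpace X]
    (p : X) (r : ℝ) (hr : r < π) (hcover : ∀ y : X, dist p y ≤ r)
    (hcomp : ∀ (q : X) (γ : ℝ → X) (L : ℝ), 0 ≤ L → IsUnitSpeedOn γ 0 L →
      dist (γ 0) (γ L) = L → dist q (γ 0) + L + dist (γ L) q < 2 * π →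
      ∀ t ∈ Icc 0 L, dist q (γ t) ≤ sphCompDist L (dist q (γ L)) (dist q (γ 0)) t)
    (γ : X → ℝ → X) (h0 : ∀ y, γ y 0 = p) (h1 : ∀ y, γ y (dist p y) = y)
    (huni : ∀ y, IsUnitSpeedOn (γ y) 0 (dist p y)) :
    Continuous (fun z : X × unitInterval => γ z.1 ((z.2 : ℝ) * dist p z.1)) := by
  have hr0 : 0 ≤ r := le_trans dist_nonneg (hcover p)
  have humem : ∀ z : X × unitInterval, (z.2 : ℝ) * dist p z.1 ∈ Icc (0:ℝ) (dist p z.1) :=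
    fun z => ⟨mul_nonneg z.2.2.1 dist_nonneg, mul_le_of_le_one_left dist_nonneg z.2.2.2⟩
  rw [continuous_iff_continuousAt]
  rintro ⟨y, t⟩
  set L := dist p y with hLdef
  set s := (t : ℝ) * L with hsdef
  have hsmem : s ∈ Icc (0:ℝ) L := humem (y, t)
  have hLr : L ≤ r := hcover y
  have hLpi : L < π := lt_of_le_of_lt hLr hr
  by_cases hs0 : s = 0
  · -- target point is p
    have hkey : ∀ z : X × unitInterval,
        dist (γ z.1 ((z.2 : ℝ) * dist p z.1)) (γ y s) = (z.2 : ℝ) * dist p z.1 := by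
      intro z
      have hu := humem z
      have h := huni z.1 ((z.2 : ℝ) * dist p z.1) hu 0 ⟨le_refl 0, dist_nonneg⟩
      rw [h0 z.1] at h
      rw [hs0, h0 y, h, sub_zero, abs_of_nonneg hu.1]
    rw [ContinuousAt, tendsto_iff_dist_tendsto_zero]
    have hc : Continuous fun z : X × unitInterval => (z.2 : ℝ) * dist p z.1 := by fun_prop
    have ht := hc.tendsto (y, t)
    rw [show ((t : ℝ) * dist p y) = (0:ℝ) from hs0] at ht
    exact ht.congr fun z => (hkey z).symm
  · -- main case
    have hspos : 0 < s := lt_of_le_of_ne hsmem.1 (Ne.symm hs0)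
    have hLpos : 0 < L := lt_of_lt_of_le hspos hsmem.2
    have hsinL : 0 < Real.sin L := Real.sin_pos_of_pos_of_lt_pi hLpos hLpi
    have hsins : 0 < Real.sin s :=
      Real.sin_pos_of_pos_of_lt_pi hspos (lt_of_le_of_lt hsmem.2 hLpi)
    have hne : Real.sin L * Real.sin s ≠ 0 := by positivity
    set q : X := γ y s with hq
    have hqp : dist q p = s := by
      have h := huni y s hsmem 0 ⟨le_refl 0, dist_nonneg⟩
      rw [h0 y] at h
      rw [hq, h, sub_zero, abs_of_nonneg hsmem.1]
    have hqy : dist q y = L - s := by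
      have h := huni y s hsmem L ⟨dist_nonneg, le_refl L⟩
      rw [h1 y] at h
      rw [hq, h, abs_of_nonpos (by linarith [hsmem.2] : s - L ≤ 0)]
      ring
    -- the comparison bound, eventually
    have hev : ∀ᶠ z : X × unitInterval in nhds (y, t),
        dist (γ z.1 ((z.2 : ℝ) * dist p z.1)) q ≤
          sphCompDist (dist p z.1) (dist q z.1) s ((z.2 : ℝ) * dist p z.1) := by
      have hcn : Continuous fun z : X × unitInterval => dist y z.1 := by fun_prop
      have hlt : ∀ᶠ z : X × unitInterval in nhds (y, t), dist y z.1 < 2 * π - 2 * r := by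
        have := hcn.continuousAt (x := (y, t))
        have h2 : (0:ℝ) < 2 * π - 2 * r := by linarith [hr]
        exact this.eventually_lt continuousAt_const (by simp only [dist_self]; linarith)
      filter_upwards [hlt] with z hz
      set y' := z.1
      set L' := dist p y' with hL'
      set u := (z.2 : ℝ) * L' with hu
      have huIcc : u ∈ Icc (0:ℝ) L' := humem z
      have hperim : dist q (γ y' 0) + L' + dist (γ y' L') q < 2 * π := by
        rw [h0 y', h1 y']
        have h3 : dist y' q ≤ dist y' y + dist y q := dist_triangle y' y q
        have h4 : dist y q = L - s := by rw [dist_comm]; exact hqy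
        have h5 : dist y' y = dist y y' := dist_comm y' y
        linarith [hqp, hcover y']
      have hb := hcomp q (γ y') L' dist_nonneg (huni y') (by rw [h0 y', h1 y']) hperim u huIcc
      rw [h0 y', h1 y', hqp] at hb
      rw [dist_comm]
      exact hb
    -- the comparison function tends to 0
    have ha : ContinuousAt (fun z : X × unitInterval => dist p z.1) (y, t) := by fun_prop
    have hbc : ContinuousAt (fun z : X × unitInterval => dist q z.1) (y, t) := by fun_prop
    have huc : ContinuousAt (fun z : X × unitInterval => (z.2 : ℝ) * dist p z.1) (y, t) := by
      fun_prop
    have hA : ContinuousAt (fun z : X × unitInterval =>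
        Real.cos s * Real.cos ((z.2 : ℝ) * dist p z.1) +
          Real.sin s * Real.sin ((z.2 : ℝ) * dist p z.1) *
            ((Real.cos (dist q z.1) - Real.cos (dist p z.1) * Real.cos s) /
              (Real.sin (dist p z.1) * Real.sin s))) (y, t) := by
      exact (continuousAt_const.mul (Real.continuous_cos.continuousAt.comp huc)).add
        ((continuousAt_const.mul (Real.continuous_sin.continuousAt.comp huc)).mul
          (((Real.continuous_cos.continuousAt.comp hbc).sub
              ((Real.continuous_cos.continuousAt.comp ha).mul continuousAt_const)).div
            ((Real.continuous_sin.continuousAt.comp ha).mul continuousAt_const) hne))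
    have hg : ContinuousAt (fun z : X × unitInterval =>
        sphCompDist (dist p z.1) (dist q z.1) s ((z.2 : ℝ) * dist p z.1)) (y, t) := by
      unfold sphCompDist
      exact Real.continuous_arccos.continuousAt.comp hA
    have hval : sphCompDist (dist p y) (dist q y) s ((t : ℝ) * dist p y) = 0 := by
      rw [← hLdef, ← hsdef, hqy]
      unfold sphCompDist
      rw [Real.cos_sub]
      rw [show Real.cos L * Real.cos s + Real.sin L * Real.sin s -
          Real.cos L * Real.cos s = Real.sin L * Real.sin s from by ring]
      rw [div_self hne, mul_one]
      rw [show Real.cos s * Real.cos s + Real.sin s * Real.sin s = 1 from by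
        have := Real.sin_sq_add_cos_sq s; nlinarith]
      exact Real.arccos_one
    have htg : Filter.Tendsto (fun z : X × unitInterval =>
        sphCompDist (dist p z.1) (dist q z.1) s ((z.2 : ℝ) * dist p z.1))
        (nhds (y, t)) (nhds 0) := by
      have := hg.tendsto
      rwa [hval] at this
    rw [ContinuousAt, tendsto_iff_dist_tendsto_zero]
    exact squeeze_zero' (Filter.Eventually.of_forall fun z => dist_nonneg) hev htg

/-- A complete `CAT(1)` space of radius strictly less than `π` (i.e. contained in a closed
ball of radius `r < π` around some point) is contractible. -/
theorem cat1_contractible_of_radius_lt_pi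
    {X : Type*} [MetricSpace X] [CompleteSpace X]
    (hcat : IsCAT1 X) (p : X) (r : ℝ) (hr : r < π)
    (hcover : ∀ y : X, dist p y ≤ r) :
    ContractibleSpace X := by
  obtain ⟨hgeo, hcomp⟩ := hcat
  have hlt : ∀ y : X, dist p y < π := fun y => lt_of_le_of_lt (hcover y) hr
  choose γ h0 h1 huni using fun y => hgeo p y (hlt y)
  have hcont := key_cont p r hr hcover hcomp γ h0 h1 huni
  rw [contractible_iff_id_nullhomotopic]
  refine ⟨p, ?_⟩
  refine ⟨{ toFun := fun q => γ q.2 ((unitInterval.symm q.1 : ℝ) * dist p q.2)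
            continuous_toFun := ?_
            map_zero_left := ?_
            map_one_left := ?_ }⟩
  · exact hcont.comp (continuous_snd.prodMk
      (unitInterval.continuous_symm.comp continuous_fst))
  · intro x
    simp [h1 x]
  · intro x
    simp [h0 x]
end

section
/- Let X be a CAT(1) space, and let γ : [0, L] → X with L ≤ π be a unit-speed local geodesic. Then γ is a minimizing geodesic, i.e. d(γ(0), γ(L)) = L. -/
open Set Real

/-- `γ` is a unit-speed local geodesic on `[a,b]`: around every parameter it is a unit-speed
minimizing geodesic. -/
def IsLocalGeodesicOn {X : Type*} [MetricSpace X] (γ : ℝ → X) (a b : ℝ) : Prop :=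
  ∀ t ∈ Icc a b, ∃ ε > (0:ℝ), ∀ s ∈ Icc a b ∩ Icc (t - ε) (t + ε),
    ∀ s' ∈ Icc a b ∩ Icc (t - ε) (t + ε), dist (γ s) (γ s') = |s - s'|

/-- The key spherical trigonometry computation. -/
lemma sph_key (M ε' δ d : ℝ) (hε'0 : 0 < ε') (hε'M : ε' < M) (hδ0 : 0 < δ)
    (hMδ : M + δ ≤ π) (hd0 : 0 ≤ d) (hdle : d ≤ M + δ)
    (hcomp : M ≤ sphCompDist (ε' + δ) d (M - ε') ε') : d = M + δ := by
  have hM0 : 0 < M := hε'0.trans hε'M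
  have hMπ : M < π := by linarith
  have hsc : 0 < Real.sin (M - ε') := Real.sin_pos_of_pos_of_lt_pi (by linarith) (by linarith)
  have hse : 0 < Real.sin ε' := Real.sin_pos_of_pos_of_lt_pi hε'0 (by linarith)
  have hsa : 0 < Real.sin (ε' + δ) := Real.sin_pos_of_pos_of_lt_pi (by linarith) (by linarith)
  set X : ℝ := (Real.cos d - Real.cos (ε' + δ) * Real.cos (M - ε')) /
      (Real.sin (ε' + δ) * Real.sin (M - ε')) with hXdef
  set Y : ℝ := Real.cos (M - ε') * Real.cos ε' + Real.sin (M - ε') * Real.sin ε' * X with hYdef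
  have hcomp' : M ≤ Real.arccos Y := hcomp
  have hYle : Y ≤ Real.cos M := by
    rcases le_or_gt Y (-1) with h | h
    · exact h.trans (Real.neg_one_le_cos M)
    rcases le_or_gt Y 1 with h1 | h1
    · have hc := Real.cos_arccos h.le h1
      have hle := Real.cos_le_cos_of_nonneg_of_le_pi hM0.le (Real.arccos_le_pi Y) hcomp'
      linarith
    · exfalso
      have : Real.arccos Y = 0 := Real.arccos_eq_zero.mpr h1.le
      rw [this] at hcomp'; linarith
  have hcosM : Real.cos M = Real.cos (M - ε') * Real.cos ε' - Real.sin (M - ε') * Real.sin ε' := by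
    rw [show M = (M - ε') + ε' by ring, Real.cos_add]
    ring_nf
  have hXle : X ≤ -1 := by nlinarith [mul_pos hsc hse]
  have hnum : Real.cos d - Real.cos (ε' + δ) * Real.cos (M - ε') ≤
      -(Real.sin (ε' + δ) * Real.sin (M - ε')) := by
    have hpos := mul_pos hsa hsc
    have := (div_le_iff₀ hpos).mp hXle
    linarith
  have hcosd : Real.cos d ≤ Real.cos (M + δ) := by
    have h2 : Real.cos (M + δ) =
        Real.cos (ε' + δ) * Real.cos (M - ε') - Real.sin (ε' + δ) * Real.sin (M - ε') := by
      rw [show M + δ = (ε' + δ) + (M - ε') by ring, Real.cos_add]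
    linarith
  have hcosd' : Real.cos (M + δ) ≤ Real.cos d :=
    Real.cos_le_cos_of_nonneg_of_le_pi hd0 hMδ hdle
  exact Real.injOn_cos ⟨hd0, hdle.trans hMδ⟩ ⟨by linarith, hMδ⟩ (le_antisymm hcosd hcosd')

/-- A local geodesic is 1-Lipschitz. -/
lemma local_geodesic_lipschitz {X : Type*} [MetricSpace X] (γ : ℝ → X) (L : ℝ)
    (hγ : IsLocalGeodesicOn γ 0 L) :
    ∀ s t : ℝ, 0 ≤ s → s ≤ t → t ≤ L → dist (γ s) (γ t) ≤ t - s := by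
  intro s t hs hst htL
  set T : Set ℝ := {u | u ∈ Icc s t ∧ dist (γ s) (γ u) ≤ u - s} with hT
  have hsT : s ∈ T := ⟨⟨le_refl s, hst⟩, by simp⟩
  have hne : T.Nonempty := ⟨s, hsT⟩
  have hbdd : BddAbove T := ⟨t, fun u hu => hu.1.2⟩
  set m := sSup T with hm
  have hsm : s ≤ m := le_csSup hbdd hsT
  have hmt : m ≤ t := csSup_le hne fun u hu => hu.1.2
  have hm0L : m ∈ Icc (0:ℝ) L := ⟨hs.trans hsm, hmt.trans htL⟩
  obtain ⟨ε, hε, hloc⟩ := hγ m hm0L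
  -- m ∈ T
  obtain ⟨u, huT, hum⟩ := exists_lt_of_lt_csSup hne (show m - ε < m by linarith)
  have hum' : u ≤ m := le_csSup hbdd huT
  have h1 : dist (γ u) (γ m) = m - u := by
    have := hloc u ⟨⟨hs.trans huT.1.1, huT.1.2.trans htL⟩, ⟨hum.le, by linarith⟩⟩
        m ⟨hm0L, ⟨by linarith, by linarith⟩⟩
    rw [this, abs_sub_comm, abs_of_nonneg (by linarith)]
  have hmT : m ∈ T := by
    refine ⟨⟨hsm, hmt⟩, ?_⟩
    calc dist (γ s) (γ m) ≤ dist (γ s) (γ u) + dist (γ u) (γ m) := dist_triangle _ _ _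
      _ ≤ (u - s) + (m - u) := by rw [h1]; linarith [huT.2]
      _ = m - s := by ring
  -- m = t
  have hmeq : m = t := by
    by_contra hne'
    have hmt' : m < t := lt_of_le_of_ne hmt hne'
    set u' := min (m + ε) t with hu'
    have hu'm : m < u' := lt_min (by linarith) hmt'
    have hu't : u' ≤ t := min_le_right _ _
    have h2 : dist (γ m) (γ u') = u' - m := by
      have := hloc m ⟨hm0L, ⟨by linarith, by linarith⟩⟩
          u' ⟨⟨by linarith, hu't.trans htL⟩, ⟨by linarith, min_le_left _ _⟩⟩
      rw [this, abs_sub_comm, abs_of_nonneg (by linarith)]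
    have hu'T : u' ∈ T := by
      refine ⟨⟨by linarith, hu't⟩, ?_⟩
      calc dist (γ s) (γ u') ≤ dist (γ s) (γ m) + dist (γ m) (γ u') := dist_triangle _ _ _
        _ ≤ (m - s) + (u' - m) := by rw [h2]; linarith [hmT.2]
        _ = u' - s := by ring
    have := le_csSup hbdd hu'T
    linarith
  have := hmT.2
  rw [hmeq] at this
  exact this

/-- In a complete `CAT(1)` space, a unit-speed local geodesic of length `L ≤ π` is a
minimizing geodesic. -/
theorem cat1_local_geodesic_is_minimizing
    {X : Type*} [MetricSpace X] [CompleteSpace X]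
    (hcat : IsCAT1 X) (γ : ℝ → X) (L : ℝ) (hL0 : 0 ≤ L) (hLπ : L ≤ π)
    (hγ : IsLocalGeodesicOn γ 0 L) :
    dist (γ 0) (γ L) = L := by
  have lip := local_geodesic_lipschitz γ L hγ
  set S : Set ℝ := {u | u ∈ Icc 0 L ∧ dist (γ 0) (γ u) = u} with hS
  have h0S : (0:ℝ) ∈ S := ⟨⟨le_refl 0, hL0⟩, by simp⟩
  have hne : S.Nonempty := ⟨0, h0S⟩
  have hbdd : BddAbove S := ⟨L, fun u hu => hu.1.2⟩
  set M := sSup S with hMdef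
  have hM0 : 0 ≤ M := le_csSup hbdd h0S
  have hML : M ≤ L := csSup_le hne fun u hu => hu.1.2
  -- M ∈ S (closedness)
  have hMS : dist (γ 0) (γ M) = M := by
    have hle : dist (γ 0) (γ M) ≤ M := lip 0 M le_rfl hM0 (hML.trans le_rfl) |>.trans (by linarith)
    have hge : M ≤ dist (γ 0) (γ M) := by
      have key : ∀ u ∈ S, u ≤ (dist (γ 0) (γ M) + M) / 2 := by
        intro u hu
        have huM : u ≤ M := le_csSup hbdd hu
        have h1 : dist (γ u) (γ M) ≤ M - u := lip u M hu.1.1 huM (hML)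
        have h2 : u = dist (γ 0) (γ u) := hu.2.symm
        have h3 := dist_triangle (γ 0) (γ u) (γ M)
        linarith [dist_triangle (γ 0) (γ M) (γ u), dist_comm (γ u) (γ M) ▸ h1]
      have := csSup_le hne key
      linarith
    linarith
  -- prefix minimality
  have hprefix : ∀ s, 0 ≤ s → s ≤ M → dist (γ 0) (γ s) = s := by
    intro s hs hsM
    have h1 : dist (γ 0) (γ s) ≤ s := by simpa using lip 0 s le_rfl hs (hsM.trans hML)
    have h2 : dist (γ s) (γ M) ≤ M - s := lip s M hs hsM hML
    have h3 := dist_triangle (γ 0) (γ s) (γ M)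
    linarith [hMS ▸ h3]
  -- M = L
  have hMeqL : M = L := by
    by_contra hne'
    have hMLlt : M < L := lt_of_le_of_ne hML hne'
    obtain ⟨ε, hε, hloc⟩ := hγ M ⟨hM0, hML⟩
    rcases eq_or_lt_of_le hM0 with hM0' | hM0'
    · -- M = 0
      set δ := min ε L / 2 with hδdef
      have hδ0 : 0 < δ := by
        have : 0 < L := by linarith
        positivity
      have hδε : δ ≤ ε / 2 := by
        have := min_le_left ε L; simp only [hδdef]; linarith
      have hδL : δ ≤ L := by
        have := min_le_right ε L; simp only [hδdef]; linarith
      have hd : dist (γ 0) (γ δ) = δ := by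
        have hM00 : M = 0 := hM0'.symm
        have := hloc 0 ⟨⟨le_rfl, hL0⟩, ⟨by rw [hM00]; linarith, by rw [hM00]; linarith⟩⟩
            δ ⟨⟨hδ0.le, hδL⟩, ⟨by rw [hM00]; linarith, by rw [hM00]; linarith⟩⟩
        rw [this, abs_sub_comm, sub_zero, abs_of_nonneg hδ0.le]
      have hδS : δ ∈ S := ⟨⟨hδ0.le, hδL⟩, hd⟩
      have := le_csSup hbdd hδS
      linarith [hMdef, hM0']
    · -- M > 0
      set ε' := min ε M / 2 with hε'def
      have hε'0 : 0 < ε' := by positivity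
      have hε'M : ε' < M := by
        have := min_le_right ε M; simp only [hε'def]; linarith
      have hε'ε : ε' ≤ ε / 2 := by
        have := min_le_left ε M; simp only [hε'def]; linarith
      set δ := min ε (L - M) / 2 with hδdef
      have hδ0 : 0 < δ := by
        have : 0 < L - M := by linarith
        positivity
      have hδε : δ ≤ ε / 2 := by
        have := min_le_left ε (L - M); simp only [hδdef]; linarith
      have hδLM : δ < L - M := by
        have := min_le_right ε (L - M); simp only [hδdef]; linarith
      have hMδL : M + δ < L := by linarith
      set σ : ℝ → X := fun u => γ (M - ε' + u) with hσdef
      have hmem : ∀ u ∈ Icc (0:ℝ) (ε' + δ),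
          M - ε' + u ∈ Icc (0:ℝ) L ∩ Icc (M - ε) (M + ε) := by
        intro u hu
        exact ⟨⟨by linarith [hu.1], by linarith [hu.2]⟩, ⟨by linarith [hu.1], by linarith [hu.2]⟩⟩
      have hσus : IsUnitSpeedOn σ 0 (ε' + δ) := by
        intro u hu v hv
        have := hloc _ (hmem u hu) _ (hmem v hv)
        simp only [hσdef]
        rw [this]
        congr 1
        ring
      have hσends : dist (σ 0) (σ (ε' + δ)) = ε' + δ := by
        have := hσus 0 ⟨le_rfl, by linarith⟩ (ε' + δ) ⟨by linarith, le_rfl⟩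
        rw [this, abs_sub_comm, sub_zero, abs_of_nonneg (by linarith)]
      have hσ0 : dist (γ 0) (σ 0) = M - ε' := by
        simp only [hσdef, add_zero]
        exact hprefix (M - ε') (by linarith) (by linarith)
      set d := dist (γ 0) (γ (M + δ)) with hddef
      have hσL : σ (ε' + δ) = γ (M + δ) := by simp only [hσdef]; congr 1; ring
      have hd0 : 0 ≤ d := dist_nonneg
      have hdle : d ≤ M + δ := by
        simpa using lip 0 (M + δ) le_rfl (by linarith) (by linarith)
      have hperim : dist (γ 0) (σ 0) + (ε' + δ) + dist (σ (ε' + δ)) (γ 0) < 2 * π := by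
        rw [hσ0, hσL, dist_comm]
        have : M + δ ≤ π := by linarith
        linarith
      have hcomp := hcat.2 (γ 0) σ (ε' + δ) (by linarith) hσus hσends hperim
          ε' ⟨hε'0.le, by linarith⟩
      have hσε' : σ ε' = γ M := by simp only [hσdef]; congr 1; ring
      rw [hσε', hσL, hσ0, hMS, ← hddef] at hcomp
      have hdeq : d = M + δ := sph_key M ε' δ d hε'0 hε'M hδ0 (by linarith) hd0 hdle hcomp
      have hMδS : M + δ ∈ S := ⟨⟨by linarith, by linarith⟩, by rw [← hddef]; exact hdeq⟩
      have := le_csSup hbdd hMδS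
      linarith [hMdef]
  rw [← hMeqL]
  exact hMS
end

section
/- Let (X, d, m) be a metric measure space with a function θ : X → (0, ∞) such that for every geodesic γ : [0,1] → X contained in a ball of radius R and every t ∈ (0,1): θ(γ(1))^{1/n} ≤ (1 + 4CR²) θ(γ(t))^{1/n} and θ(γ(t))^{1/n} ≤ (1 + 4CR²) θ(γ(1))^{1/n}, where C is a fixed constant, and θ is locally bounded. Then θ is constant on the interior of every geodesic: for every geodesic ξ : [0,1] → X and s, t ∈ (0,1), θ(ξ(t)) = θ(ξ(s)). -/
/-!
Applying the comparison to the piece of a geodesic `ξ` between parameters `a` and `b`, which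
lies in a ball of radius `O(|b - a|)`, at its midpoint and in both directions, gives
`|log θ(ξ b) - log θ(ξ a)| ≤ c (b - a)²`. Hence `u ↦ log θ(ξ u)^{1/n}` has vanishing
derivative on `(0, 1)` and is constant there.
-/

open Set Metric Filter Topology Asymptotics Real
open AffineMap (lineMap)

theorem hasDerivAt_zero_of_abs_sub_le_sq {g : ℝ → ℝ} {x c : ℝ}
    (h : ∀ᶠ y in 𝓝 x, |g y - g x| ≤ c * (y - x) ^ 2) : HasDerivAt g 0 x := by
  rw [hasDerivAt_iff_isLittleO]
  simp only [smul_zero, sub_zero]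
  refine IsBigO.trans_isLittleO (g := fun y => ‖y - x‖ ^ 2) (.of_bound c ?_)
    (isLittleO_pow_sub_sub x one_lt_two)
  filter_upwards [h] with y hy
  simpa only [Real.norm_eq_abs, sq_abs, abs_pow, abs_abs] using hy

theorem IsOpen.is_const_of_abs_sub_le_sq {s : Set ℝ} (hs : IsOpen s) (hs' : IsPreconnected s)
    {g : ℝ → ℝ} {c : ℝ} (h : ∀ x ∈ s, ∀ y ∈ s, |g y - g x| ≤ c * (y - x) ^ 2)
    {x y : ℝ} (hx : x ∈ s) (hy : y ∈ s) : g x = g y := by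
  have hg : ∀ x ∈ s, HasDerivAt g 0 x := fun x hx =>
    hasDerivAt_zero_of_abs_sub_le_sq (eventually_of_mem (hs.mem_nhds hx) (h x hx))
  exact hs.is_const_of_deriv_eq_zero hs'
    (fun x hx => (hg x hx).differentiableAt.differentiableWithinAt) (fun x hx => (hg x hx).deriv)
    hx hy

theorem Real.log_sub_log_le_of_le_one_add_sq_mul {p q ε : ℝ} (hp : 0 < p) (hq : 0 < q)
    (hε : 0 ≤ ε) (h : q ≤ (1 + ε) ^ 2 * p) : log q - log p ≤ 2 * ε := by
  have hlog : log q ≤ 2 * log (1 + ε) + log p := by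
    calc log q ≤ log ((1 + ε) ^ 2 * p) := log_le_log hq h
      _ = 2 * log (1 + ε) + log p := by
        rw [log_mul (by positivity) hp.ne', log_pow]; push_cast; ring
  linarith [log_le_sub_one_of_pos (by linarith : (0 : ℝ) < 1 + ε)]

def IsConstantSpeedGeodesic {X : Type*} [PseudoMetricSpace X] (γ : ℝ → X) : Prop :=
  ∀ s ∈ Icc (0:ℝ) 1, ∀ t ∈ Icc (0:ℝ) 1,
    dist (γ s) (γ t) = dist (γ 0) (γ 1) * |s - t|

namespace IsConstantSpeedGeodesic

variable {X : Type*} [PseudoMetricSpace X] {γ : ℝ → X}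

theorem comp_lineMap (hγ : IsConstantSpeedGeodesic γ) {a b : ℝ} (ha : a ∈ Icc (0:ℝ) 1)
    (hb : b ∈ Icc (0:ℝ) 1) :
    IsConstantSpeedGeodesic fun u => γ (lineMap a b u) := by
  intro s hs t ht
  have hmem : ∀ u ∈ Icc (0:ℝ) 1, lineMap a b u ∈ Icc (0:ℝ) 1 := fun u hu =>
    (convex_Icc 0 1).lineMap_mem ha hb hu
  simp only [AffineMap.lineMap_apply_zero, AffineMap.lineMap_apply_one]
  rw [hγ _ (hmem s hs) _ (hmem t ht), hγ a ha b hb, ← Real.dist_eq, ← Real.dist_eq,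
    ← Real.dist_eq, dist_lineMap_lineMap]
  ring

theorem mem_ball_zero (hγ : IsConstantSpeedGeodesic γ) {R : ℝ} (hR : dist (γ 0) (γ 1) < R)
    {s : ℝ} (hs : s ∈ Icc (0:ℝ) 1) : γ s ∈ ball (γ 0) R := by
  have hs1 : |s - 0| ≤ 1 := by rw [sub_zero, abs_of_nonneg hs.1]; exact hs.2
  rw [mem_ball, hγ s hs 0 (left_mem_Icc.2 zero_le_one)]
  nlinarith [dist_nonneg (x := γ 0) (y := γ 1), abs_nonneg (s - 0)]

end IsConstantSpeedGeodesic

section GeodesicComparison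

variable {X : Type*} [PseudoMetricSpace X] {θ : X → ℝ} {C n : ℝ}

def SatisfiesGeodesicComparison (θ : X → ℝ) (C n : ℝ) : Prop :=
  ∀ γ : ℝ → X, IsConstantSpeedGeodesic γ →
    ∀ R : ℝ, 0 < R → (∃ x₀ : X, ∀ s ∈ Icc (0:ℝ) 1, γ s ∈ ball x₀ R) →
    ∀ t ∈ Ioo (0:ℝ) 1,
      θ (γ 1) ^ (1 / n) ≤ (1 + 4 * C * R ^ 2) * θ (γ t) ^ (1 / n) ∧
      θ (γ t) ^ (1 / n) ≤ (1 + 4 * C * R ^ 2) * θ (γ 1) ^ (1 / n)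

/-- Both endpoints are compared with the common midpoint of the subsegments `[a, b]` and
`[b, a]`, which lie in the ball of radius `R = (d(ξ 0, ξ 1) + 1) |b - a| > d(ξ a, ξ b)` about
their start. -/
theorem SatisfiesGeodesicComparison.rpow_le_sq_mul (hθ : SatisfiesGeodesicComparison θ C n)
    (hC : 0 ≤ C) {ξ : ℝ → X} (hξ : IsConstantSpeedGeodesic ξ) {a b : ℝ}
    (ha : a ∈ Icc (0:ℝ) 1) (hb : b ∈ Icc (0:ℝ) 1) (hab : a ≠ b) :
    θ (ξ b) ^ (1 / n) ≤
      (1 + 4 * C * ((dist (ξ 0) (ξ 1) + 1) * |b - a|) ^ 2) ^ 2 * θ (ξ a) ^ (1 / n) := by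
  set R := (dist (ξ 0) (ξ 1) + 1) * |b - a|
  have hba : 0 < |b - a| := abs_pos.2 (sub_ne_zero.2 hab.symm)
  have hR : 0 < R := mul_pos (by positivity) hba
  have hdist : ∀ {x y}, x ∈ Icc (0:ℝ) 1 → y ∈ Icc (0:ℝ) 1 → |y - x| = |b - a| →
      dist (ξ x) (ξ y) < R := fun hx hy hxy => by
    rw [hξ _ hx _ hy, abs_sub_comm, hxy]
    nlinarith
  have half : (1 / 2 : ℝ) ∈ Ioo (0:ℝ) 1 := by norm_num
  have hfwd := hθ _ (hξ.comp_lineMap ha hb) R hR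
    ⟨_, fun _ => (hξ.comp_lineMap ha hb).mem_ball_zero (by simpa using hdist ha hb rfl)⟩ _ half
  have hbwd := hθ _ (hξ.comp_lineMap hb ha) R hR
    ⟨_, fun _ => (hξ.comp_lineMap hb ha).mem_ball_zero
      (by simpa using hdist hb ha (abs_sub_comm a b))⟩ _ half
  have hmid : lineMap b a (1 / 2 : ℝ) = lineMap a b (1 / 2 : ℝ) := by
    rw [← AffineMap.lineMap_apply_one_sub]; norm_num
  simp only [AffineMap.lineMap_apply_one, hmid] at hfwd hbwd
  have hK : 0 ≤ 1 + 4 * C * R ^ 2 := by positivity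
  set K := 1 + 4 * C * R ^ 2
  calc θ (ξ b) ^ (1 / n) ≤ K * θ (ξ (lineMap a b (1 / 2 : ℝ))) ^ (1 / n) := hfwd.1
    _ ≤ K * (K * θ (ξ a) ^ (1 / n)) := by gcongr; exact hbwd.2
    _ = K ^ 2 * θ (ξ a) ^ (1 / n) := by ring

theorem SatisfiesGeodesicComparison.abs_log_rpow_sub_le (hθ : SatisfiesGeodesicComparison θ C n)
    (hC : 0 ≤ C) (hpos : ∀ x, 0 < θ x) {ξ : ℝ → X} (hξ : IsConstantSpeedGeodesic ξ)
    {a b : ℝ} (ha : a ∈ Icc (0:ℝ) 1) (hb : b ∈ Icc (0:ℝ) 1) :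
    |log (θ (ξ b) ^ (1 / n)) - log (θ (ξ a) ^ (1 / n))| ≤
      8 * C * (dist (ξ 0) (ξ 1) + 1) ^ 2 * (b - a) ^ 2 := by
  rcases eq_or_ne a b with rfl | hab
  · simp
  have hε : 4 * C * ((dist (ξ 0) (ξ 1) + 1) * |b - a|) ^ 2 =
      4 * C * (dist (ξ 0) (ξ 1) + 1) ^ 2 * (b - a) ^ 2 := by
    rw [mul_pow, sq_abs]; ring
  have hle := log_sub_log_le_of_le_one_add_sq_mul (rpow_pos_of_pos (hpos _) _)
    (rpow_pos_of_pos (hpos _) _) (by positivity) (hθ.rpow_le_sq_mul hC hξ ha hb hab)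
  have hge := log_sub_log_le_of_le_one_add_sq_mul (rpow_pos_of_pos (hpos _) _)
    (rpow_pos_of_pos (hpos _) _) (by positivity) (hθ.rpow_le_sq_mul hC hξ hb ha hab.symm)
  rw [abs_sub_comm a b] at hge
  rw [abs_sub_le_iff]
  constructor <;> linarith

end GeodesicComparison

theorem density_constant_along_geodesics_general
    {X : Type*} [MetricSpace X] (θ : X → ℝ) (C n : ℝ) (hC : 0 < C) (hn : 0 < n)
    (hpos : ∀ x : X, 0 < θ x)
    (hest : ∀ (γ : ℝ → X),
      (∀ s ∈ Icc (0:ℝ) 1, ∀ t ∈ Icc (0:ℝ) 1,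
        dist (γ s) (γ t) = dist (γ 0) (γ 1) * |s - t|) →
      ∀ R : ℝ, 0 < R → (∃ x₀ : X, ∀ s ∈ Icc (0:ℝ) 1, γ s ∈ ball x₀ R) →
      ∀ t ∈ Ioo (0:ℝ) 1,
        θ (γ 1) ^ (1 / n) ≤ (1 + 4 * C * R ^ 2) * θ (γ t) ^ (1 / n) ∧
        θ (γ t) ^ (1 / n) ≤ (1 + 4 * C * R ^ 2) * θ (γ 1) ^ (1 / n)) :
    ∀ ξ : ℝ → X,
      (∀ s ∈ Icc (0:ℝ) 1, ∀ t ∈ Icc (0:ℝ) 1,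
        dist (ξ s) (ξ t) = dist (ξ 0) (ξ 1) * |s - t|) →
      ∀ s ∈ Ioo (0:ℝ) 1, ∀ t ∈ Ioo (0:ℝ) 1, θ (ξ t) = θ (ξ s) := by
  intro ξ hξ s hs t ht
  have hlog : log (θ (ξ t) ^ (1 / n)) = log (θ (ξ s) ^ (1 / n)) :=
    isOpen_Ioo.is_const_of_abs_sub_le_sq isPreconnected_Ioo
      (fun a ha b hb => SatisfiesGeodesicComparison.abs_log_rpow_sub_le hest hC.le hpos hξ
        (Ioo_subset_Icc_self ha) (Ioo_subset_Icc_self hb)) ht hs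
  have hroot : θ (ξ t) ^ (1 / n) = θ (ξ s) ^ (1 / n) :=
    log_injOn_pos (rpow_pos_of_pos (hpos _) _) (rpow_pos_of_pos (hpos _) _) hlog
  rwa [rpow_left_inj (hpos _).le (hpos _).le (one_div_ne_zero hn.ne')] at hroot

/-- If `θ : X → (0,∞)` is locally bounded and satisfies, for every geodesic `γ : [0,1] → X`
contained in a ball of radius `R` and every `t ∈ (0,1)`, the two-sided estimate
`θ(γ(1))^{1/n} ≤ (1 + 4CR²) θ(γ(t))^{1/n}` and `θ(γ(t))^{1/n} ≤ (1 + 4CR²) θ(γ(1))^{1/n}`,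
then `θ` is constant on the interior of every geodesic. -/
theorem density_constant_along_geodesics
    {X : Type*} [MetricSpace X] (θ : X → ℝ) (C n : ℝ) (hC : 0 < C) (hn : 0 < n)
    (hpos : ∀ x : X, 0 < θ x)
    (hlocbdd : ∀ x : X, ∃ U ∈ nhds x, ∃ M : ℝ, ∀ y ∈ U, θ y ≤ M)
    (hest : ∀ (γ : ℝ → X),
      (∀ s ∈ Icc (0:ℝ) 1, ∀ t ∈ Icc (0:ℝ) 1,
        dist (γ s) (γ t) = dist (γ 0) (γ 1) * |s - t|) →
      ∀ R : ℝ, 0 < R → (∃ x₀ : X, ∀ s ∈ Icc (0:ℝ) 1, γ s ∈ ball x₀ R) →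
      ∀ t ∈ Ioo (0:ℝ) 1,
        θ (γ 1) ^ (1 / n) ≤ (1 + 4 * C * R ^ 2) * θ (γ t) ^ (1 / n) ∧
        θ (γ t) ^ (1 / n) ≤ (1 + 4 * C * R ^ 2) * θ (γ 1) ^ (1 / n)) :
    ∀ ξ : ℝ → X,
      (∀ s ∈ Icc (0:ℝ) 1, ∀ t ∈ Icc (0:ℝ) 1,
        dist (ξ s) (ξ t) = dist (ξ 0) (ξ 1) * |s - t|) →
      ∀ s ∈ Ioo (0:ℝ) 1, ∀ t ∈ Ioo (0:ℝ) 1, θ (ξ t) = θ (ξ s) :=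
  density_constant_along_geodesics_general θ C n hC hn hpos hest
end

section
/- Let η < 0 and let σ_η^{(t)}(l) = sinh(t l √(−η))/sinh(l √(−η)) for l > 0 and σ_η^{(t)}(0) = t. Let u : [0,1] → [0, ∞) be a function on a geodesic parameter interval satisfying the σ-concavity inequality u(1/2) ≥ σ_η^{(1/2)}(l) u(0) + σ_η^{(1/2)}(l) u(1) for the restriction of u to every subinterval (with l the length of that subinterval), and suppose u satisfies this midpoint inequality for all subintervals. Then u satisfies the full inequality u(t) ≥ σ_η^{(1−t)}(l) u(0) + σ_η^{(t)}(l) u(1) for all t ∈ [0,1], provided u is lower semicontinuous. -/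
open Set Real

/-! The σ-affine interpolant `B t = σ^{(1-t)}(L) u(0) + σ^{(t)}(L) u(1)` satisfies the midpoint
relation with equality, by `sinh x + sinh y = 2 sinh ((x + y)/2) cosh ((x - y)/2)`, and the
midpoint weight `σ^{(1/2)}(l) = 1 / (2 cosh (l √(-η) / 2))` lies in `[0, 1/2]`. So `v = u - B` is
lower semicontinuous, vanishes at `0` and `1`, and `v m ≥ w (v a + v b)` whenever `m` is the
midpoint of `[a, b] ⊆ [0, 1]`. Writing a minimum point `m` of `v` as the midpoint of a subinterval
with one end at `0` or `1` gives `v m ≥ w · v m ≥ v m / 2` if `v m < 0`, which is absurd. -/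

/-- The distortion coefficient `σ_η^{(t)}(l)` for `η < 0`:
`sinh(t·l·√(−η))/sinh(l·√(−η))` for `l > 0`, and `t` for `l = 0`. -/
noncomputable def sigEta (η t l : ℝ) : ℝ :=
  if l = 0 then t else Real.sinh (t * (l * Real.sqrt (-η))) / Real.sinh (l * Real.sqrt (-η))

theorem LowerSemicontinuousOn.nonneg_of_midpoint_le {v w : ℝ → ℝ}
    (hv : LowerSemicontinuousOn v (Icc 0 1)) (hw₀ : ∀ h, 0 ≤ w h) (hw : ∀ h, w h ≤ 1 / 2)
    (hmid : ∀ a b, 0 ≤ a → a ≤ b → b ≤ 1 → w (b - a) * (v a + v b) ≤ v ((a + b) / 2))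
    (h0 : 0 ≤ v 0) (h1 : 0 ≤ v 1) : ∀ t ∈ Icc (0 : ℝ) 1, 0 ≤ v t := by
  obtain ⟨m, hm, hmin⟩ := hv.exists_isMinOn (nonempty_Icc.2 zero_le_one) isCompact_Icc
  suffices 0 ≤ v m from fun t ht => this.trans (hmin ht)
  obtain ⟨a, b, ha, hab, hb, rfl, hend⟩ : ∃ a b, 0 ≤ a ∧ a ≤ b ∧ b ≤ 1 ∧ (a + b) / 2 = m ∧
      (0 ≤ v a ∨ 0 ≤ v b) := by
    rcases le_total m (1 / 2) with h | h
    · exact ⟨0, 2 * m, le_rfl, by linarith [hm.1], by linarith, by ring, .inl h0⟩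
    · exact ⟨2 * m - 1, 1, by linarith, by linarith [hm.2], le_rfl, by ring, .inr h1⟩
  have hsum : v ((a + b) / 2) ≤ v a + v b := by
    rcases hend with h | h
    · linarith [isMinOn_iff.1 hmin b ⟨ha.trans hab, hb⟩]
    · linarith [isMinOn_iff.1 hmin a ⟨ha, hab.trans hb⟩]
  by_contra! hneg
  nlinarith [hmid a b ha hab hb, mul_le_mul_of_nonneg_left hsum (hw₀ (b - a)),
    mul_le_mul_of_nonpos_right (hw (b - a)) hneg.le]

theorem Real.sinh_add_sinh (x y : ℝ) :
    sinh x + sinh y = 2 * sinh ((x + y) / 2) * cosh ((x - y) / 2) := by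
  obtain ⟨p, q, rfl, rfl⟩ : ∃ p q, x = p + q ∧ y = p - q :=
    ⟨(x + y) / 2, (x - y) / 2, by ring, by ring⟩
  rw [show (p + q + (p - q)) / 2 = p by ring, show (p + q - (p - q)) / 2 = q by ring,
    sinh_add, sinh_sub]
  ring

theorem sigEta_zero_left (η l : ℝ) : sigEta η 0 l = 0 := by
  unfold sigEta; split_ifs <;> simp

theorem sigEta_one_left {η : ℝ} (hη : η < 0) (l : ℝ) : sigEta η 1 l = 1 := by
  unfold sigEta
  split_ifs with hl
  · rfl
  · have : l * √(-η) ≠ 0 := mul_ne_zero hl (sqrt_pos.2 (neg_pos.2 hη)).ne'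
    rw [one_mul, div_self (sinh_ne_zero.2 this)]

theorem continuous_sigEta_left (η l : ℝ) : Continuous fun t => sigEta η t l := by
  unfold sigEta
  split_ifs
  · exact continuous_id
  · fun_prop

theorem sigEta_add_sigEta (η x y l : ℝ) :
    sigEta η x l + sigEta η y l =
      2 * cosh ((x - y) * (l * √(-η)) / 2) * sigEta η ((x + y) / 2) l := by
  unfold sigEta
  split_ifs with hl
  · simp [hl]
    ring
  · rw [← add_div, sinh_add_sinh]
    ring_nf

theorem sigEta_half {η : ℝ} (hη : η < 0) (l : ℝ) :
    sigEta η (1 / 2) l = (2 * cosh (l * √(-η) / 2))⁻¹ := by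
  have h := sigEta_add_sigEta η 1 0 l
  rw [sigEta_one_left hη, sigEta_zero_left] at h
  norm_num at h
  exact eq_inv_of_mul_eq_one_right h.symm

theorem sigEta_half_nonneg {η : ℝ} (hη : η < 0) (l : ℝ) : 0 ≤ sigEta η (1 / 2) l := by
  rw [sigEta_half hη]
  positivity

theorem sigEta_half_le {η : ℝ} (hη : η < 0) (l : ℝ) : sigEta η (1 / 2) l ≤ 1 / 2 := by
  rw [sigEta_half hη, one_div]
  gcongr
  linarith [one_le_cosh (l * √(-η) / 2)]

theorem sigEta_half_mul_add {η : ℝ} (hη : η < 0) (x y l : ℝ) :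
    sigEta η (1 / 2) ((x - y) * l) * (sigEta η x l + sigEta η y l) =
      sigEta η ((x + y) / 2) l := by
  rw [sigEta_half hη, sigEta_add_sigEta, mul_assoc (x - y), inv_mul_cancel_left₀]
  exact mul_ne_zero two_ne_zero (cosh_pos _).ne'

theorem sigma_concavity_of_midpoint_general (η : ℝ) (hη : η < 0) (L : ℝ)
    (u : ℝ → ℝ)
    (hlsc : LowerSemicontinuousOn u (Icc (0:ℝ) 1))
    (hmid : ∀ a b : ℝ, 0 ≤ a → a ≤ b → b ≤ 1 →
      sigEta η (1/2) ((b - a) * L) * u a + sigEta η (1/2) ((b - a) * L) * u b ≤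
        u ((a + b) / 2)) :
    ∀ t ∈ Icc (0:ℝ) 1, sigEta η (1 - t) L * u 0 + sigEta η t L * u 1 ≤ u t := by
  set B : ℝ → ℝ := fun t => sigEta η (1 - t) L * u 0 + sigEta η t L * u 1 with hB
  have hBmid (a b : ℝ) : sigEta η (1 / 2) ((b - a) * L) * (B a + B b) = B ((a + b) / 2) := by
    have h₀ := sigEta_half_mul_add hη (1 - a) (1 - b) L
    have h₁ := sigEta_half_mul_add hη b a L
    rw [show 1 - a - (1 - b) = b - a by ring, show (1 - a + (1 - b)) / 2 = 1 - (a + b) / 2 by ring]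
      at h₀
    rw [add_comm b a] at h₁
    simp only [hB]
    linear_combination u 0 * h₀ + u 1 * h₁
  have hBcont : Continuous B := by
    have := continuous_sigEta_left η L
    fun_prop
  have hv : LowerSemicontinuousOn (fun t => u t + -B t) (Icc 0 1) :=
    hlsc.add hBcont.neg.continuousOn.lowerSemicontinuousOn
  have key := hv.nonneg_of_midpoint_le (w := fun h => sigEta η (1 / 2) (h * L))
    (fun _ => sigEta_half_nonneg hη _) (fun _ => sigEta_half_le hη _) ?_ ?_ ?_
  · exact fun t ht => by linarith [key t ht]
  · intro a b ha hab hb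
    linarith [hmid a b ha hab hb, hBmid a b]
  all_goals simp [B, sigEta_zero_left, sigEta_one_left hη]

/-- Midpoint `σ`-concavity on all subintervals, together with lower semicontinuity, upgrades
to full `σ`-concavity: if `u : [0,1] → [0,∞)` (on a geodesic of length `L`) satisfies
`u((a+b)/2) ≥ σ_η^{(1/2)}((b−a)L)·u(a) + σ_η^{(1/2)}((b−a)L)·u(b)` for every subinterval
`[a,b] ⊆ [0,1]`, then `u(t) ≥ σ_η^{(1−t)}(L)·u(0) + σ_η^{(t)}(L)·u(1)` for all `t ∈ [0,1]`. -/
theorem sigma_concavity_of_midpoint (η : ℝ) (hη : η < 0) (L : ℝ) (hL : 0 ≤ L)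
    (u : ℝ → ℝ)
    (hnn : ∀ t ∈ Icc (0:ℝ) 1, 0 ≤ u t)
    (hlsc : LowerSemicontinuousOn u (Icc (0:ℝ) 1))
    (hmid : ∀ a b : ℝ, 0 ≤ a → a ≤ b → b ≤ 1 →
      sigEta η (1/2) ((b - a) * L) * u a + sigEta η (1/2) ((b - a) * L) * u b ≤
        u ((a + b) / 2)) :
    ∀ t ∈ Icc (0:ℝ) 1, sigEta η (1 - t) L * u 0 + sigEta η t L * u 1 ≤ u t :=
  sigma_concavity_of_midpoint_general η hη L u hlsc hmid
end

section
/- Let X be a geodesic metric space, and let 𝓡 ⊆ X be a nonempty subset that is open, and strongly convex in the sense that if γ : [0,1] → X is a geodesic with γ(t₀) ∈ 𝓡 for some t₀ ∈ (0,1), then γ(t) ∈ 𝓡 for all t ∈ (0,1). Suppose additionally that for each p ∈ 𝓡 there exists ε > 0 such that every geodesic ending at p extends past p by length ε. Then 𝓡 is dense in X. -/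
open Set

/-- Let `X` be a complete geodesic metric space, and `𝓡 ⊆ X` a nonempty open subset that is
strongly convex (if a geodesic hits `𝓡` at an interior time, its whole interior lies in `𝓡`)
and such that at each `p ∈ 𝓡` there is `ε > 0` so that every geodesic ending at `p` extends
past `p` by length `ε`. Then `𝓡` is dense in `X`. -/
theorem dense_of_strongly_convex_extendible
    {X : Type*} [MetricSpace X] [CompleteSpace X]
    (hgeo : ∀ x y : X, ∃ γ : ℝ → X,
      γ 0 = x ∧ γ (dist x y) = y ∧ IsUnitSpeedOn γ 0 (dist x y))
    (R : Set X) (hne : R.Nonempty) (hopen : IsOpen R)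
    (hconv : ∀ γ : ℝ → X,
      (∀ s ∈ Icc (0:ℝ) 1, ∀ t ∈ Icc (0:ℝ) 1,
        dist (γ s) (γ t) = dist (γ 0) (γ 1) * |s - t|) →
      ∀ t₀ ∈ Ioo (0:ℝ) 1, γ t₀ ∈ R → ∀ t ∈ Ioo (0:ℝ) 1, γ t ∈ R)
    (hext : ∀ p ∈ R, ∃ ε > (0:ℝ), ∀ (γ : ℝ → X) (a : ℝ), 0 ≤ a →
      IsUnitSpeedOn γ 0 a → γ a = p →
      ∃ γ' : ℝ → X, IsUnitSpeedOn γ' 0 (a + ε) ∧ ∀ t ∈ Icc 0 a, γ' t = γ t) :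
    Dense R := by
  obtain ⟨p, hp⟩ := hne
  obtain ⟨ε, hε, hε'⟩ := hext p hp
  rw [Metric.dense_iff]
  intro x r hr
  set a := dist x p with ha
  have ha0 : 0 ≤ a := dist_nonneg
  rcases eq_or_lt_of_le ha0 with h0 | h0
  · -- x = p
    have : x = p := by
      rw [← dist_eq_zero]; exact h0.symm
    refine ⟨p, ?_, hp⟩
    rw [this]
    exact Metric.mem_ball_self hr
  · obtain ⟨γ, hγ0, hγa, hγus⟩ := hgeo x p
    obtain ⟨γ', hγ'us, hγ'eq⟩ := hε' γ a ha0 hγus hγa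
    have haε : 0 < a + ε := by linarith
    set σ : ℝ → X := fun t => γ' (t * (a + ε)) with hσ
    have hmem : ∀ t ∈ Icc (0:ℝ) 1, t * (a + ε) ∈ Icc 0 (a + ε) := by
      intro t ht
      constructor
      · exact mul_nonneg ht.1 haε.le
      · nlinarith [ht.1, ht.2]
    have hσgeo : ∀ s ∈ Icc (0:ℝ) 1, ∀ t ∈ Icc (0:ℝ) 1,
        dist (σ s) (σ t) = dist (σ 0) (σ 1) * |s - t| := by
      intro s hs t ht
      have h01 : dist (σ 0) (σ 1) = a + ε := by
        simp only [hσ, zero_mul, one_mul]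
        rw [hγ'us 0 (by constructor <;> linarith) (a + ε)
          (by constructor <;> linarith)]
        rw [abs_of_nonpos (by linarith)]; ring
      rw [h01, hγ'us _ (hmem s hs) _ (hmem t ht), ← sub_mul, abs_mul,
        abs_of_pos haε]
      ring
    have ht₀ : a / (a + ε) ∈ Ioo (0:ℝ) 1 := by
      constructor
      · positivity
      · rw [div_lt_one haε]; linarith
    have hσt₀ : σ (a / (a + ε)) ∈ R := by
      have : a / (a + ε) * (a + ε) = a := div_mul_cancel₀ a haε.ne'
      have heq : σ (a / (a + ε)) = γ a := by
        rw [hσ]; simp only [this]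
        exact hγ'eq a ⟨ha0, le_refl a⟩
      rw [heq, hγa]; exact hp
    set t : ℝ := min r (a + ε) / (2 * (a + ε)) with htdef
    have ht : t ∈ Ioo (0:ℝ) 1 := by
      constructor
      · apply div_pos (lt_min hr haε) (by linarith)
      · rw [div_lt_one (by linarith)]
        have := min_le_right r (a + ε)
        linarith
    have hσt : σ t ∈ R := hconv σ hσgeo _ ht₀ hσt₀ t ht
    refine ⟨σ t, ?_, hσt⟩
    rw [Metric.mem_ball, dist_comm]
    have hx : γ' 0 = x := by
      rw [hγ'eq 0 ⟨le_refl 0, ha0⟩, hγ0]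
    calc dist x (σ t) = dist (γ' 0) (γ' (t * (a + ε))) := by rw [hx]
      _ = |0 - t * (a + ε)| := hγ'us 0 ⟨le_refl 0, by linarith⟩ _
          (hmem t ⟨ht.1.le, ht.2.le⟩)
      _ = t * (a + ε) := by
          rw [abs_of_nonpos (by nlinarith [ht.1.le])]; ring
      _ < r := by
          rw [htdef, div_mul_eq_mul_div, div_lt_iff₀ (by linarith)]
          nlinarith [min_le_left r (a + ε)]
end

section
/- Let Y be a geodesic metric space and X = Y × ℝ with the product metric d((y,s),(y',s')) = √(d_Y(y,y')² + |s−s'|²). Then X is non-branching if and only if Y is non-branching. -/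
open Set

/-- `γ` is a constant-speed geodesic parametrized on `[0,1]`. -/
def IsGeodesicParam {X : Type*} [MetricSpace X] (γ : ℝ → X) : Prop :=
  ∃ L : ℝ, 0 ≤ L ∧ ∀ s ∈ Icc (0:ℝ) 1, ∀ t ∈ Icc (0:ℝ) 1, dist (γ s) (γ t) = L * |s - t|

/-- A metric space is non-branching: two geodesics on `[0,1]` that agree on a nontrivial
initial segment agree everywhere. -/
def NonBranching (X : Type*) [MetricSpace X] : Prop :=
  ∀ γ₁ γ₂ : ℝ → X, IsGeodesicParam γ₁ → IsGeodesicParam γ₂ →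
    ∀ ε ∈ Ioo (0:ℝ) 1, (∀ t ∈ Icc (0:ℝ) ε, γ₁ t = γ₂ t) → ∀ t ∈ Icc (0:ℝ) 1, γ₁ t = γ₂ t

/-!
Projections of a geodesic `Γ` of the `ℓ²`-product are geodesics. Indeed, for parameters
`a ≤ b ≤ c` the vectors of component distances of `Γ` over `[a, b]` and `[b, c]` have Euclidean
lengths adding up to that of the vector over `[a, c]`, which is componentwise dominated by their
sum (triangle inequality); equality in Minkowski's inequality then makes the component distances
additive and proportional to the parameter increments. Geodesics in `ℝ` are affine, so `ℝ` is
non-branching, and hence so is the product of two non-branching spaces. Conversely `Y` embeds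
isometrically into `Y × ℝ` as `Y × {0}`.
-/

theorem WithLp.prod_dist_sq_eq_of_L2 {α β : Type*} [PseudoMetricSpace α] [PseudoMetricSpace β]
    (x y : WithLp 2 (α × β)) :
    dist x y ^ 2 = dist x.fst y.fst ^ 2 + dist x.snd y.snd ^ 2 := by
  have h := WithLp.prod_dist_eq_add (p := 2) (by norm_num) x y
  simp only [ENNReal.toReal_ofNat, Real.rpow_two, ← Real.sqrt_eq_rpow] at h
  rw [h, Real.sq_sqrt (by positivity)]

theorem WithLp.isometry_toLp_prod_mk_const {α β : Type*} [PseudoMetricSpace α]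
    [PseudoMetricSpace β] (b : β) : Isometry fun a : α => WithLp.toLp 2 (a, b) :=
  Isometry.of_dist_eq fun a a' => by
    refine (pow_left_inj₀ dist_nonneg dist_nonneg two_ne_zero).1 ?_
    simp [WithLp.prod_dist_sq_eq_of_L2]

/-- Equality case of Minkowski's inequality `‖P + Q‖ ≤ ‖P‖ + ‖Q‖` in the positive quadrant of
the Euclidean plane, for `P = (p₁, q₁)`, `Q = (p₂, q₂)` and a vector `(F, G) ≤ P + Q` of norm
`‖P‖ + ‖Q‖`. -/
theorem minkowski_eq_case {A B p₁ q₁ p₂ q₂ F G : ℝ} (hA : 0 ≤ A) (hB : 0 ≤ B)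
    (hp₁ : 0 ≤ p₁) (hq₁ : 0 ≤ q₁) (hp₂ : 0 ≤ p₂) (hq₂ : 0 ≤ q₂) (hF₀ : 0 ≤ F) (hG₀ : 0 ≤ G)
    (h₁ : p₁ ^ 2 + q₁ ^ 2 = A ^ 2) (h₂ : p₂ ^ 2 + q₂ ^ 2 = B ^ 2)
    (h : F ^ 2 + G ^ 2 = (A + B) ^ 2) (hF : F ≤ p₁ + p₂) (hG : G ≤ q₁ + q₂) :
    F = p₁ + p₂ ∧ G = q₁ + q₂ ∧ B * p₁ = A * p₂ ∧ B * q₁ = A * q₂ := by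
  have cauchy_schwarz : p₁ * p₂ + q₁ * q₂ ≤ A * B := by
    nlinarith [sq_nonneg (p₁ * q₂ - p₂ * q₁), mul_nonneg hA hB]
  have hF' : F = p₁ + p₂ := by nlinarith
  have hG' : G = q₁ + q₂ := by nlinarith
  have inner_eq : p₁ * p₂ + q₁ * q₂ = A * B := by subst hF' hG'; nlinarith
  have hsum : (B * p₁ - A * p₂) ^ 2 + (B * q₁ - A * q₂) ^ 2 = 0 := by
    linear_combination B ^ 2 * h₁ + A ^ 2 * h₂ - 2 * A * B * inner_eq
  obtain ⟨hp, hq⟩ := (add_eq_zero_iff_of_nonneg (sq_nonneg _) (sq_nonneg _)).1 hsum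
  exact ⟨hF', hG', sub_eq_zero.1 (pow_eq_zero_iff two_ne_zero |>.1 hp),
    sub_eq_zero.1 (pow_eq_zero_iff two_ne_zero |>.1 hq)⟩

theorem IsGeodesicParam.eq_affine {γ : ℝ → ℝ} (hγ : IsGeodesicParam γ) :
    ∀ t ∈ Icc (0:ℝ) 1, γ t = γ 0 + t * (γ 1 - γ 0) := by
  obtain ⟨L, hL, h⟩ := hγ
  intro t ht
  have h0 := h t ht 0 (by simp)
  have h1 := h 1 (by simp) t ht
  have h01 := h 1 (by simp) 0 (by simp)
  simp only [Real.dist_eq, sub_zero, abs_of_nonneg ht.1, abs_of_nonneg (sub_nonneg.2 ht.2),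
    abs_one, mul_one] at h0 h1 h01
  have ht01 := congrArg (t * ·) h01
  have hLt := mul_nonneg hL ht.1
  rcases abs_cases (γ t - γ 0) with ⟨e0, _⟩ | ⟨e0, _⟩ <;>
    rcases abs_cases (γ 1 - γ t) with ⟨e1, _⟩ | ⟨e1, _⟩ <;>
    rcases abs_cases (γ 1 - γ 0) with ⟨e01, _⟩ | ⟨e01, _⟩ <;>
    rw [e01] at ht01 <;> linarith

theorem nonBranching_real : NonBranching ℝ := by
  intro γ₁ γ₂ hγ₁ hγ₂ ε hε hagree t ht
  have h0 := hagree 0 ⟨le_rfl, hε.1.le⟩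
  have hε' := hagree ε ⟨hε.1.le, le_rfl⟩
  have hIcc : ε ∈ Icc (0:ℝ) 1 := ⟨hε.1.le, hε.2.le⟩
  rw [hγ₁.eq_affine ε hIcc, hγ₂.eq_affine ε hIcc, h0] at hε'
  have hslope : γ₁ 1 - γ₂ 0 = γ₂ 1 - γ₂ 0 := mul_left_cancel₀ hε.1.ne' (add_left_cancel hε')
  rw [hγ₁.eq_affine t ht, hγ₂.eq_affine t ht, h0, hslope]

section
variable {α β : Type*} [MetricSpace α] [MetricSpace β]

theorem IsGeodesicParam.of_dist_additive_proportional {γ : ℝ → α}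
    (h : ∀ a b c : ℝ, 0 ≤ a → a ≤ b → b ≤ c → c ≤ 1 →
      dist (γ a) (γ c) = dist (γ a) (γ b) + dist (γ b) (γ c) ∧
      (c - b) * dist (γ a) (γ b) = (b - a) * dist (γ b) (γ c)) :
    IsGeodesicParam γ := by
  set D := dist (γ 0) (γ 1)
  have dist_from_zero : ∀ v ∈ Icc (0:ℝ) 1, dist (γ 0) (γ v) = v * D := by
    intro v hv
    obtain ⟨hadd, hprop⟩ := h 0 v 1 le_rfl hv.1 hv.2 le_rfl
    linear_combination hprop - v * hadd
  have dist_of_le : ∀ u v : ℝ, 0 ≤ u → u ≤ v → v ≤ 1 → dist (γ u) (γ v) = D * (v - u) := by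
    intro u v hu huv hv
    have hadd := (h 0 u v le_rfl hu huv hv).1
    rw [dist_from_zero u ⟨hu, huv.trans hv⟩, dist_from_zero v ⟨hu.trans huv, hv⟩] at hadd
    linear_combination -hadd
  refine ⟨D, dist_nonneg, fun s hs t ht => ?_⟩
  rcases le_total s t with hst | hts
  · rw [dist_of_le s t hs.1 hst ht.2, abs_of_nonpos (sub_nonpos.2 hst), neg_sub]
  · rw [dist_comm, dist_of_le t s ht.1 hts hs.2, abs_of_nonneg (sub_nonneg.2 hts)]

theorem IsGeodesicParam.prod_dist_additive_proportional {Γ : ℝ → WithLp 2 (α × β)}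
    (hΓ : IsGeodesicParam Γ) {a b c : ℝ} (ha : 0 ≤ a) (hab : a ≤ b) (hbc : b ≤ c) (hc : c ≤ 1) :
    (dist (Γ a).fst (Γ c).fst = dist (Γ a).fst (Γ b).fst + dist (Γ b).fst (Γ c).fst ∧
      (c - b) * dist (Γ a).fst (Γ b).fst = (b - a) * dist (Γ b).fst (Γ c).fst) ∧
    (dist (Γ a).snd (Γ c).snd = dist (Γ a).snd (Γ b).snd + dist (Γ b).snd (Γ c).snd ∧
      (c - b) * dist (Γ a).snd (Γ b).snd = (b - a) * dist (Γ b).snd (Γ c).snd) := by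
  obtain ⟨L, hL, hΓ⟩ := hΓ
  have mem : ∀ {x}, a ≤ x → x ≤ c → x ∈ Icc (0:ℝ) 1 := fun h₁ h₂ => ⟨ha.trans h₁, h₂.trans hc⟩
  have hΓ' : ∀ {s t}, a ≤ s → s ≤ t → t ≤ c → dist (Γ s) (Γ t) = L * (t - s) := by
    intro s t has hst htc
    rw [hΓ s (mem has (hst.trans htc)) t (mem (has.trans hst) htc), abs_of_nonpos (by linarith),
      neg_sub]
  rcases hL.eq_or_lt with rfl | hL
  · have hb : Γ a = Γ b := by simpa using hΓ' le_rfl hab hbc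
    have hc : Γ a = Γ c := by simpa using hΓ' le_rfl (hab.trans hbc) le_rfl
    simp [← hb, ← hc]
  have sq_eq : ∀ {s t}, a ≤ s → s ≤ t → t ≤ c →
      dist (Γ s).fst (Γ t).fst ^ 2 + dist (Γ s).snd (Γ t).snd ^ 2 = (L * (t - s)) ^ 2 :=
    fun has hst htc => by rw [← WithLp.prod_dist_sq_eq_of_L2, hΓ' has hst htc]
  obtain ⟨hfst, hsnd, hpfst, hpsnd⟩ := minkowski_eq_case
    (mul_nonneg hL.le (sub_nonneg.2 hab)) (mul_nonneg hL.le (sub_nonneg.2 hbc))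
    dist_nonneg dist_nonneg dist_nonneg dist_nonneg dist_nonneg dist_nonneg
    (sq_eq le_rfl hab hbc) (sq_eq hab hbc le_rfl)
    (by rw [sq_eq le_rfl (hab.trans hbc) le_rfl]; ring) (dist_triangle _ _ _) (dist_triangle _ _ _)
  refine ⟨⟨hfst, mul_left_cancel₀ hL.ne' ?_⟩, ⟨hsnd, mul_left_cancel₀ hL.ne' ?_⟩⟩
  · linear_combination hpfst
  · linear_combination hpsnd

theorem IsGeodesicParam.fst {Γ : ℝ → WithLp 2 (α × β)} (hΓ : IsGeodesicParam Γ) :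
    IsGeodesicParam fun t => (Γ t).fst :=
  .of_dist_additive_proportional fun _ _ _ ha hab hbc hc =>
    (hΓ.prod_dist_additive_proportional ha hab hbc hc).1

theorem IsGeodesicParam.snd {Γ : ℝ → WithLp 2 (α × β)} (hΓ : IsGeodesicParam Γ) :
    IsGeodesicParam fun t => (Γ t).snd :=
  .of_dist_additive_proportional fun _ _ _ ha hab hbc hc =>
    (hΓ.prod_dist_additive_proportional ha hab hbc hc).2

theorem IsGeodesicParam.comp_isometry {f : α → β} (hf : Isometry f) {γ : ℝ → α}
    (hγ : IsGeodesicParam γ) : IsGeodesicParam (f ∘ γ) :=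
  let ⟨L, hL, hγ⟩ := hγ
  ⟨L, hL, fun s hs t ht => (hf.dist_eq _ _).trans (hγ s hs t ht)⟩

theorem NonBranching.of_isometry {f : α → β} (hf : Isometry f) (h : NonBranching β) :
    NonBranching α := fun γ₁ γ₂ hγ₁ hγ₂ ε hε hagree t ht =>
  hf.injective <| h (f ∘ γ₁) (f ∘ γ₂) (hγ₁.comp_isometry hf) (hγ₂.comp_isometry hf) ε hε
    (fun s hs => congrArg f (hagree s hs)) t ht

theorem NonBranching.withLp_prod (hα : NonBranching α) (hβ : NonBranching β) :
    NonBranching (WithLp 2 (α × β)) := fun _ _ hΓ₁ hΓ₂ ε hε hagree t ht =>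
  WithLp.ofLp_injective 2 <| Prod.ext
    (hα _ _ hΓ₁.fst hΓ₂.fst ε hε (fun s hs => congrArg WithLp.fst (hagree s hs)) t ht)
    (hβ _ _ hΓ₁.snd hΓ₂.snd ε hε (fun s hs => congrArg WithLp.snd (hagree s hs)) t ht)

end

theorem product_nonbranching_iff_general {Y : Type*} [MetricSpace Y] :
    NonBranching (WithLp 2 (Y × ℝ)) ↔ NonBranching Y :=
  ⟨fun h => h.of_isometry (WithLp.isometry_toLp_prod_mk_const 0),
    fun h => h.withLp_prod nonBranching_real⟩

/-- For a geodesic metric space `Y`, the `ℓ²`-product `Y × ℝ` is non-branching if and only if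
`Y` is non-branching. -/
theorem product_nonbranching_iff {Y : Type*} [MetricSpace Y]
    (hgeo : ∀ y y' : Y, ∃ γ : ℝ → Y, γ 0 = y ∧ γ 1 = y' ∧
      ∀ s ∈ Icc (0:ℝ) 1, ∀ t ∈ Icc (0:ℝ) 1, dist (γ s) (γ t) = dist y y' * |s - t|) :
    NonBranching (WithLp 2 (Y × ℝ)) ↔ NonBranching Y :=
  product_nonbranching_iff_general
end
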